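/- arXiv:1501.02072 — 4 statements merged into one kernel-verified Lean document; each statement's English description precedes it below -/
import Mathlib

section
/- For every real quadratic irrational α₀ and every s > 0, the set {α ∈ PSL₂(ℤ)·α₀ : H(α) ≤ s} ∩ [0,1] is finite; that is, H is a proper height function on the orbit PSL₂(ℤ)·α₀ modulo translations by ℤ. -/
open scoped Classical

/-- `α` is a real quadratic irrational: an irrational real number which is the root of a
quadratic polynomial with rational coefficients. -/
def IsQuadIrr (α : ℝ) : Prop :=
  Irrational α ∧ ∃ a b c : ℚ, a ≠ 0 ∧ (a : ℝ) * α ^ 2 + (b : ℝ) * α + (c : ℝ) = 0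

/-- `σ` is the Galois conjugate of the real quadratic irrational `α`: the other root of
its minimal (quadratic) polynomial over `ℚ`. -/
def IsGalConj (α σ : ℝ) : Prop :=
  Irrational α ∧ σ ≠ α ∧
    ∃ a b c : ℚ, a ≠ 0 ∧ (a : ℝ) * α ^ 2 + (b : ℝ) * α + (c : ℝ) = 0 ∧
      (a : ℝ) * σ ^ 2 + (b : ℝ) * σ + (c : ℝ) = 0

/-- The Galois conjugate `α^σ` of a real quadratic irrational `α` (junk value `0` if `α`
is not a real quadratic irrational). -/
noncomputable def galConj (α : ℝ) : ℝ :=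
  if h : ∃ σ, IsGalConj α σ then h.choose else 0

/-- The height `H(α) = 2/|α − α^σ|` of a real quadratic irrational `α`. -/
noncomputable def qiHeight (α : ℝ) : ℝ := 2 / |α - galConj α|

/-- The action of `SL₂(ℤ)` (inducing the action of `PSL₂(ℤ)`) on real numbers by
homographies: the matrix `(a b; c d)` sends `x` to `(a·x+b)/(c·x+d)`. -/
noncomputable def mob (A : Matrix.SpecialLinearGroup (Fin 2) ℤ) (x : ℝ) : ℝ :=
  ((A.1 0 0 : ℝ) * x + (A.1 0 1 : ℝ)) / ((A.1 1 0 : ℝ) * x + (A.1 1 1 : ℝ))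

/-- The orbit `PSL₂(ℤ)·α₀` of a real number under the homography action. -/
def mobOrbit (α₀ : ℝ) : Set ℝ := {α | ∃ A, mob A α₀ = α}

/-- The Golden Ratio `φ = (1+√5)/2`. -/
noncomputable def goldenRat : ℝ := (1 + Real.sqrt 5) / 2

/-- The approximation constant `c(y)` of `y` by the elements of `Z` (with the height
function `H = qiHeight`): the liminf of `H(α)·|y − α|` as `α` ranges over `Z` along the
Fréchet filter, i.e. the sup over finite subsets `F` of the inf over `α ∈ Z ∖ F` of
`H(α)·|y − α|`. -/
noncomputable def approxConst (Z : Set ℝ) (y : ℝ) : ℝ :=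
  ⨆ F : Finset ℝ, ⨅ α : {α : ℝ // α ∈ Z ∧ α ∉ F}, qiHeight α.1 * |y - α.1|

/-- The Lagrange spectrum for the approximation of the elements of
`ℝ ∖ (ℚ ∪ Z)` by the elements of `Z`. -/
noncomputable def lagrangeSpectrum (Z : Set ℝ) : Set ℝ :=
  approxConst Z '' {y : ℝ | Irrational y ∧ y ∉ Z}

/-
If `α₀` is a root of `a x² + b x + c` with `a, b, c ∈ ℤ` and discriminant `D > 0`, then
`H(α₀) = 2|a|/√D`, since `α₀ - α₀^σ = ±√D/a`. A homography in `SL₂(ℤ)` transforms this quadratic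
into another integral quadratic with the same discriminant, so every `α` in the orbit is a root of
some `a' x² + b' x + c'` with discriminant `D`, and `H(α) ≤ s` bounds `|a'| ≤ s√D/2`. For
`α ∈ [0,1]`, the identity `|2a'α + b'| = √D` then bounds `|b'|`, leaving finitely many
quadratics, each with at most two roots.
-/

namespace Irrational

variable {x : ℝ}

theorem ratCast_mul_add_ne_zero (hx : Irrational x) {p : ℚ} (hp : p ≠ 0) (q : ℚ) :
    (p : ℝ) * x + q ≠ 0 :=
  ((hx.ratCast_mul hp).add_ratCast q).ne_zero

theorem eq_zero_of_ratCast_mul_add_eq_zero (hx : Irrational x) {p q : ℚ}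
    (h : (p : ℝ) * x + q = 0) : p = 0 ∧ q = 0 := by
  obtain rfl : p = 0 := by_contra fun hp ↦ hx.ratCast_mul_add_ne_zero hp q h
  exact ⟨rfl, by simpa using h⟩

theorem eq_zero_of_intCast_mul_add_eq_zero (hx : Irrational x) {p q : ℤ}
    (h : (p : ℝ) * x + q = 0) : p = 0 ∧ q = 0 := by
  exact_mod_cast hx.eq_zero_of_ratCast_mul_add_eq_zero (p := p) (q := q) (by exact_mod_cast h)

theorem leading_ne_zero_of_discrim_ne_zero (hx : Irrational x) {a b c : ℤ}
    (hroot : (a : ℝ) * x ^ 2 + b * x + c = 0) (hD : discrim a b c ≠ 0) : a ≠ 0 := by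
  rintro rfl
  obtain ⟨rfl, rfl⟩ := hx.eq_zero_of_intCast_mul_add_eq_zero (by simpa using hroot)
  simp [discrim] at hD

end Irrational

@[simp, norm_cast]
theorem Int.cast_discrim {R : Type*} [Ring R] (a b c : ℤ) :
    ((discrim a b c : ℤ) : R) = discrim (a : R) b c := by
  simp [discrim]

theorem IsQuadIrr.exists_int_coeffs {α : ℝ} (h : IsQuadIrr α) :
    ∃ a b c : ℤ, a ≠ 0 ∧ (a : ℝ) * α ^ 2 + b * α + c = 0 := by
  obtain ⟨-, a, b, c, ha, hroot⟩ := h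
  refine ⟨a.num * b.den * c.den, b.num * a.den * c.den, c.num * a.den * b.den,
    by simp [ha], ?_⟩
  have hnum (q : ℚ) : (q.num : ℝ) = q * q.den := by exact_mod_cast (Rat.mul_den_eq_num q).symm
  push_cast
  rw [hnum a, hnum b, hnum c]
  linear_combination ((a.den : ℝ) * b.den * c.den) * hroot

section IntQuadraticRoot

variable {α : ℝ} {a b c : ℤ}

theorem abs_two_mul_add_eq_sqrt_discrim (hroot : (a : ℝ) * α ^ 2 + b * α + c = 0) :
    |2 * a * α + b| = √(discrim (a : ℝ) b c) := by
  rw [discrim_eq_sq_of_quadratic_eq_zero (x := α) (by rwa [← sq]), Real.sqrt_sq_eq_abs]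

theorem Irrational.two_mul_intCast_mul_add_ne_zero (hα : Irrational α) (ha : a ≠ 0) :
    2 * (a : ℝ) * α + b ≠ 0 := by
  have h2a : ((2 * a : ℤ) : ℚ) ≠ 0 := by exact_mod_cast mul_ne_zero two_ne_zero ha
  exact_mod_cast hα.ratCast_mul_add_ne_zero h2a b

theorem discrim_pos (hα : Irrational α) (ha : a ≠ 0)
    (hroot : (a : ℝ) * α ^ 2 + b * α + c = 0) : 0 < discrim a b c := by
  have h := sq_pos_of_ne_zero (hα.two_mul_intCast_mul_add_ne_zero (b := b) ha)
  rw [← discrim_eq_sq_of_quadratic_eq_zero (x := α) (by rwa [← sq])] at h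
  exact_mod_cast h

theorem isGalConj_neg_div_sub (hα : Irrational α) (ha : a ≠ 0)
    (hroot : (a : ℝ) * α ^ 2 + b * α + c = 0) : IsGalConj α (-b / a - α) := by
  have ha' : (a : ℝ) ≠ 0 := by exact_mod_cast ha
  refine ⟨hα, fun h ↦ hα.two_mul_intCast_mul_add_ne_zero (b := b) ha ?_, a, b, c,
    by exact_mod_cast ha, by exact_mod_cast hroot, ?_⟩
  · field_simp at h
    linear_combination -h
  · push_cast
    field_simp
    linear_combination (a : ℝ) * hroot

theorem IsGalConj.eq_neg_div_sub (ha : a ≠ 0) (hroot : (a : ℝ) * α ^ 2 + b * α + c = 0)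
    {σ : ℝ} (hσ : IsGalConj α σ) : σ = -b / a - α := by
  obtain ⟨hα, hne, p, q, r, hp, hα', hσ⟩ := hσ
  have hqb : (a : ℚ) * q = p * b := by
    have h := hα.eq_zero_of_ratCast_mul_add_eq_zero (p := a * q - p * b) (q := a * r - p * c)
      (by push_cast; linear_combination (a : ℝ) * hα' - (p : ℝ) * hroot)
    linarith [h.1]
  have hsum : (p : ℝ) * (σ + α) + q = 0 := by
    have h := mul_eq_zero.1 (by linear_combination hσ - hα' :
      (σ - α) * ((p : ℝ) * (σ + α) + q) = 0)
    exact h.resolve_left (sub_ne_zero.2 hne)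
  have hp' : (p : ℝ) ≠ 0 := by exact_mod_cast hp
  have ha' : (a : ℝ) ≠ 0 := by exact_mod_cast ha
  have hqb' : (a : ℝ) * q = p * b := by exact_mod_cast hqb
  field_simp
  apply mul_left_cancel₀ hp'
  linear_combination (a : ℝ) * hsum - hqb'

theorem galConj_eq_neg_div_sub (hα : Irrational α) (ha : a ≠ 0)
    (hroot : (a : ℝ) * α ^ 2 + b * α + c = 0) : galConj α = -b / a - α := by
  have hex : ∃ σ, IsGalConj α σ := ⟨_, isGalConj_neg_div_sub hα ha hroot⟩
  rw [galConj, dif_pos hex]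
  exact hex.choose_spec.eq_neg_div_sub ha hroot

theorem qiHeight_eq (hα : Irrational α) (ha : a ≠ 0)
    (hroot : (a : ℝ) * α ^ 2 + b * α + c = 0) :
    qiHeight α = 2 * |(a : ℝ)| / √(discrim (a : ℝ) b c) := by
  have ha' : (a : ℝ) ≠ 0 := by exact_mod_cast ha
  have hdiff : α - galConj α = (2 * a * α + b) / a := by
    rw [galConj_eq_neg_div_sub hα ha hroot]
    field_simp
    ring
  rw [qiHeight, hdiff, abs_div, abs_two_mul_add_eq_sqrt_discrim hroot, div_div_eq_mul_div]

end IntQuadraticRoot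

section Homography

variable (A : Matrix.SpecialLinearGroup (Fin 2) ℤ) {x : ℝ}

theorem Matrix.SpecialLinearGroup.fin_two_det_eq_one :
    A.1 0 0 * A.1 1 1 - A.1 0 1 * A.1 1 0 = 1 := by
  rw [← Matrix.det_fin_two, A.2]

theorem mob_denom_ne_zero (hx : Irrational x) : (A.1 1 0 : ℝ) * x + A.1 1 1 ≠ 0 := by
  intro h
  obtain ⟨h10, h11⟩ := hx.eq_zero_of_intCast_mul_add_eq_zero h
  simpa [h10, h11] using Matrix.SpecialLinearGroup.fin_two_det_eq_one A

theorem mob_inverse_relation (hden : (A.1 1 0 : ℝ) * x + A.1 1 1 ≠ 0) :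
    (A.1 1 1 : ℝ) * mob A x - A.1 0 1 = x * (A.1 0 0 - A.1 1 0 * mob A x) := by
  have h : mob A x * (A.1 1 0 * x + A.1 1 1) = A.1 0 0 * x + A.1 0 1 := div_mul_cancel₀ _ hden
  linear_combination h

theorem Irrational.mob (hx : Irrational x) : Irrational (mob A x) := by
  rintro ⟨t, ht⟩
  have hrel := mob_inverse_relation A (mob_denom_ne_zero A hx)
  rw [← ht] at hrel
  obtain ⟨h0, h1⟩ := hx.eq_zero_of_ratCast_mul_add_eq_zero (p := A.1 0 0 - A.1 1 0 * t)
    (q := A.1 0 1 - A.1 1 1 * t) (by push_cast; linear_combination -hrel)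
  have hdet : ((A.1 0 0 * A.1 1 1 - A.1 0 1 * A.1 1 0 : ℤ) : ℚ) = 1 := by
    exact_mod_cast Matrix.SpecialLinearGroup.fin_two_det_eq_one A
  push_cast at hdet
  exact one_ne_zero (by linear_combination (A.1 1 1 : ℚ) * h0 - (A.1 1 0 : ℚ) * h1 - hdet :
    (1 : ℚ) = 0)

theorem exists_int_quadratic_mob (hx : Irrational x) {a b c : ℤ}
    (hroot : (a : ℝ) * x ^ 2 + b * x + c = 0) :
    ∃ a' b' c' : ℤ, (a' : ℝ) * mob A x ^ 2 + b' * mob A x + c' = 0 ∧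
      discrim a' b' c' = discrim a b c := by
  have hrel := mob_inverse_relation A (mob_denom_ne_zero A hx)
  have hdet := Matrix.SpecialLinearGroup.fin_two_det_eq_one A
  set y := mob A x
  set p := A.1 0 0
  set q := A.1 0 1
  set r := A.1 1 0
  set s := A.1 1 1
  -- With `Q = a X² + b X + c`, the new quadratic is `(p - r y)² Q((s y - q)/(p - r y))`,
  -- i.e. `Q ∘ A⁻¹`; its discriminant is `(det A)² · discrim Q`.
  refine ⟨a * s ^ 2 - b * r * s + c * r ^ 2, -2 * a * q * s + b * (p * s + q * r) - 2 * c * p * r,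
    a * q ^ 2 - b * p * q + c * p ^ 2, ?_, ?_⟩
  · push_cast
    linear_combination (p - r * y) ^ 2 * hroot +
      (a * (s * y - q + x * (p - r * y)) + b * (p - r * y)) * hrel
  · simp only [discrim]
    linear_combination (p * s - q * r + 1) * (b ^ 2 - 4 * a * c) * hdet

end Homography

theorem Int.abs_le_ceil_of_abs_cast_le {a : ℤ} {M : ℝ} (h : |(a : ℝ)| ≤ M) : |a| ≤ ⌈M⌉ := by
  exact_mod_cast h.trans (Int.le_ceil M)

theorem finite_setOf_root_discrim_eq (D : ℤ) (M : ℝ) :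
    {x : ℝ | |x| ≤ 1 ∧ ∃ a b c : ℤ, a ≠ 0 ∧ |(a : ℝ)| ≤ M ∧ discrim a b c = D ∧
      (a : ℝ) * x ^ 2 + b * x + c = 0}.Finite := by
  have hbox : (Set.Icc (-⌈M⌉) ⌈M⌉ ×ˢ Set.Icc (-⌈√D + 2 * M⌉) ⌈√D + 2 * M⌉).Finite :=
    (Set.finite_Icc _ _).prod (Set.finite_Icc _ _)
  refine (hbox.biUnion fun ab _ ↦
    Set.toFinite ({(-ab.2 + √D) / (2 * ab.1), (-ab.2 - √D) / (2 * ab.1)} : Set ℝ)).subset ?_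
  rintro x ⟨hx, a, b, c, ha, haM, hD, hroot⟩
  have hD' : discrim (a : ℝ) b c = D := by exact_mod_cast hD
  have habs : |2 * a * x + b| = √D := hD' ▸ abs_two_mul_add_eq_sqrt_discrim hroot
  have hbM : |(b : ℝ)| ≤ √D + 2 * M := by
    have h2a : |2 * a * x| ≤ 2 * M := by
      rw [abs_mul, abs_mul, abs_two]
      nlinarith [abs_nonneg (a : ℝ), abs_nonneg x]
    calc |(b : ℝ)| = |(2 * a * x + b) - 2 * a * x| := by ring_nf
      _ ≤ |2 * a * x + b| + |2 * a * x| := abs_sub _ _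
      _ ≤ √D + 2 * M := by linarith
  refine Set.mem_biUnion (x := (a, b))
    ⟨abs_le.1 (Int.abs_le_ceil_of_abs_cast_le haM),
      abs_le.1 (Int.abs_le_ceil_of_abs_cast_le hbM)⟩ ?_
  have hsq : discrim (a : ℝ) b c = √D * √D := by
    rw [discrim_eq_sq_of_quadratic_eq_zero (x := x) (by rwa [← sq]), ← sq_abs, habs, sq]
  exact (quadratic_eq_zero_iff (by exact_mod_cast ha) hsq x).1 (by rwa [← sq])

theorem qiHeight_proper_general (α₀ : ℝ) (hα₀ : IsQuadIrr α₀) (s : ℝ) :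
    {α : ℝ | α ∈ mobOrbit α₀ ∧ qiHeight α ≤ s ∧ α ∈ Set.Icc (0 : ℝ) 1}.Finite := by
  obtain ⟨a, b, c, ha, hroot⟩ := hα₀.exists_int_coeffs
  have hirr := hα₀.1
  have hD₀ := discrim_pos hirr ha hroot
  have hsqrtD : 0 < √((discrim a b c : ℤ) : ℝ) := Real.sqrt_pos.2 (Int.cast_pos.2 hD₀)
  refine (finite_setOf_root_discrim_eq (discrim a b c)
    (s * √((discrim a b c : ℤ) : ℝ) / 2)).subset ?_
  rintro _ ⟨⟨A, rfl⟩, hH, h0, h1⟩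
  obtain ⟨a', b', c', hroot', hD⟩ := exists_int_quadratic_mob A hirr hroot
  have ha' : a' ≠ 0 := (hirr.mob A).leading_ne_zero_of_discrim_ne_zero hroot' (hD ▸ hD₀.ne')
  refine ⟨abs_le.2 ⟨by linarith, h1⟩, a', b', c', ha', ?_, hD, hroot'⟩
  rw [qiHeight_eq (hirr.mob A) ha' hroot', ← Int.cast_discrim, hD, div_le_iff₀ hsqrtD] at hH
  linarith

/-- Parkkonen-Paulin: `H(α) = 2/|α − α^σ|` is a proper height function on the orbit
`PSL₂(ℤ)·α₀` of a real quadratic irrational `α₀` modulo translations by `ℤ`: for every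
`s > 0`, the set `{α ∈ PSL₂(ℤ)·α₀ : H(α) ≤ s} ∩ [0,1]` is finite. -/
theorem qiHeight_proper (α₀ : ℝ) (hα₀ : IsQuadIrr α₀) (s : ℝ) (hs : 0 < s) :
    {α : ℝ | α ∈ mobOrbit α₀ ∧ qiHeight α ≤ s ∧ α ∈ Set.Icc (0 : ℝ) 1}.Finite :=
  qiHeight_proper_general α₀ hα₀ s
end

section
/- A real number α is a quadratic irrational if and only if there exists a matrix A ∈ SL₂(ℤ) with |tr A| > 2 whose associated homography fixes α. Moreover, for any such A, the other fixed point in ℝ of the homography of A is the Galois conjugate α^σ of α. -/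
open scoped Classical

/-- The homography associated to the matrix `A = (a b; c d)` fixes the real number `x`:
in projective terms, `a·x + b = x·(c·x + d)`. -/
def MobFixes (A : Matrix.SpecialLinearGroup (Fin 2) ℤ) (x : ℝ) : Prop :=
  (A.1 0 0 : ℝ) * x + (A.1 0 1 : ℝ) = x * ((A.1 1 0 : ℝ) * x + (A.1 1 1 : ℝ))


/-!
The homography of `A = (a b; c d)` fixes `x` iff `c x² + (d - a) x - b = 0`, a quadratic whose
discriminant is `(tr A)² - 4` since `det A = 1`. For `|tr A| > 2` this is not a perfect square,
so `c ≠ 0` and the two fixed points are conjugate quadratic irrationals. Conversely, if `α` is a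
root of `a x² + b x + c` with integer coefficients, its discriminant `D` is positive and not a
square, and a solution `u² - D v² = 1`, `v ≠ 0`, of Pell's equation gives the matrix
`(u - b v, -2 c v; 2 a v, u + b v)` in `SL₂(ℤ)` of trace `2u`, `|u| > 1`, which fixes `α`.
-/

open scoped MatrixGroups

theorem Int.not_isSquare_sq_sub_four {t : ℤ} (ht : 2 < |t|) : ¬IsSquare (t ^ 2 - 4) := by
  rintro ⟨k, hk⟩
  have hk' : |k| * |k| = t ^ 2 - 4 := by
    rw [← abs_mul, ← hk, abs_of_nonneg (by nlinarith [sq_abs t])]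
  -- `t ^ 2 - 4` lies strictly between `(|t| - 1) ^ 2` and `|t| ^ 2`
  have hlt : |k| < |t| := by nlinarith [sq_abs t, abs_nonneg k, abs_nonneg t]
  have hgt : |t| - 1 < |k| := by nlinarith [sq_abs t, abs_nonneg k]
  omega

theorem intCast_discrim_eq_sq {K : Type*} [CommRing K] {a b c : ℤ} {x : K}
    (hx : (a : K) * (x * x) + b * x + c = 0) :
    ((discrim a b c : ℤ) : K) = (2 * a * x + b) ^ 2 := by
  rw [← discrim_eq_sq_of_quadratic_eq_zero hx]
  simp [discrim]

theorem irrational_iff_not_isSquare_discrim {a b c : ℤ} (ha : a ≠ 0) {x : ℝ}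
    (hx : (a : ℝ) * (x * x) + b * x + c = 0) : Irrational x ↔ ¬IsSquare (discrim a b c) := by
  constructor
  · rintro hirr ⟨m, hm⟩
    have hdisc : discrim (a : ℝ) b c = m * m := by
      rw [← Int.cast_mul, ← hm]; push_cast [discrim]; ring
    rcases (quadratic_eq_zero_iff (by exact_mod_cast ha) hdisc x).1 hx with h | h
    · exact hirr.ne_rational (-b + m) (2 * a) (by push_cast; exact h)
    · exact hirr.ne_rational (-b - m) (2 * a) (by push_cast; exact h)
  · rintro hns ⟨q, rfl⟩
    have hq : (a : ℚ) * (q * q) + b * q + c = 0 := by exact_mod_cast hx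
    exact hns (Rat.isSquare_intCast_iff.1 ⟨_, (intCast_discrim_eq_sq hq).trans (sq _)⟩)

theorem exists_int_quadratic_of_rat {a b c : ℚ} (ha : a ≠ 0) {x : ℝ}
    (hx : (a : ℝ) * x ^ 2 + b * x + c = 0) :
    ∃ a' b' c' : ℤ, a' ≠ 0 ∧ (a' : ℝ) * (x * x) + b' * x + c' = 0 := by
  refine ⟨a.num * b.den * c.den, a.den * b.num * c.den, a.den * b.den * c.num,
    by simp [ha], ?_⟩
  rw [← Rat.num_div_den a, ← Rat.num_div_den b, ← Rat.num_div_den c] at hx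
  push_cast at hx ⊢
  field_simp at hx
  linear_combination hx

theorem exists_hyperbolic_mobFixes_of_quadratic {a b c : ℤ} {x : ℝ}
    (hx : (a : ℝ) * (x * x) + b * x + c = 0)
    (hpos : 0 < discrim a b c) (hns : ¬IsSquare (discrim a b c)) :
    ∃ A : SL(2, ℤ), 2 < |A.1 0 0 + A.1 1 1| ∧ MobFixes A x := by
  obtain ⟨u, v, hpell, hv⟩ := Pell.exists_of_not_isSquare hpos hns
  refine ⟨⟨!![u - b * v, -(2 * c * v); 2 * a * v, u + b * v], ?_⟩, ?_, ?_⟩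
  · rw [Matrix.det_fin_two_of, ← hpell, discrim]
    ring
  · have hu : 1 < |u| := by
      rw [← one_lt_sq_iff_one_lt_abs]
      nlinarith [sq_pos_of_ne_zero hv]
    simp only [Matrix.of_apply, Matrix.cons_val', Matrix.cons_val_zero, Matrix.cons_val_one,
      Matrix.empty_val', Matrix.cons_val_fin_one]
    rw [show u - b * v + (u + b * v) = 2 * u by ring, abs_mul, abs_two]
    omega
  · unfold MobFixes
    simp only [Matrix.of_apply, Matrix.cons_val', Matrix.cons_val_zero, Matrix.cons_val_one,
      Matrix.empty_val', Matrix.cons_val_fin_one]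
    push_cast
    linear_combination (-2 * (v : ℝ)) * hx

section Hyperbolic

variable {A : SL(2, ℤ)} {x α : ℝ}

theorem mobFixes_iff_quadratic (A : SL(2, ℤ)) (x : ℝ) :
    MobFixes A x ↔ (A.1 1 0 : ℝ) * (x * x) + ((A.1 1 1 - A.1 0 0 : ℤ) : ℝ) * x
      + ((-A.1 0 1 : ℤ) : ℝ) = 0 := by
  unfold MobFixes
  push_cast
  constructor <;> intro h <;> linear_combination -h

theorem discrim_fixed_quadratic (A : SL(2, ℤ)) :
    discrim (A.1 1 0) (A.1 1 1 - A.1 0 0) (-A.1 0 1) = (A.1 0 0 + A.1 1 1) ^ 2 - 4 := by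
  have hdet := A.2
  rw [Matrix.det_fin_two] at hdet
  rw [discrim]
  linear_combination (-4) * hdet

theorem lowerLeft_ne_zero_of_two_lt_abs_trace (ht : 2 < |A.1 0 0 + A.1 1 1|) : A.1 1 0 ≠ 0 := by
  intro h0
  have hdet := A.2
  rw [Matrix.det_fin_two, h0, mul_zero, sub_zero] at hdet
  rcases Int.mul_eq_one_iff_eq_one_or_neg_one.1 hdet with ⟨h1, h2⟩ | ⟨h1, h2⟩ <;>
    simp [h1, h2] at ht

theorem irrational_of_mobFixes (ht : 2 < |A.1 0 0 + A.1 1 1|) (hx : MobFixes A x) :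
    Irrational x := by
  rw [irrational_iff_not_isSquare_discrim (lowerLeft_ne_zero_of_two_lt_abs_trace ht)
    ((mobFixes_iff_quadratic A x).1 hx), discrim_fixed_quadratic]
  exact Int.not_isSquare_sq_sub_four ht

theorem isGalConj_of_mobFixes (ht : 2 < |A.1 0 0 + A.1 1 1|) (hα : MobFixes A α)
    (hx : MobFixes A x) (hne : x ≠ α) : IsGalConj α x := by
  have hirr := irrational_of_mobFixes ht hα
  rw [mobFixes_iff_quadratic] at hα hx
  refine ⟨hirr, hne,
    A.1 1 0, A.1 1 1 - A.1 0 0, -A.1 0 1,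
    by exact_mod_cast lowerLeft_ne_zero_of_two_lt_abs_trace ht, ?_, ?_⟩
  · push_cast at hα ⊢; linear_combination hα
  · push_cast at hx ⊢; linear_combination hx

theorem exists_ne_mobFixes (ht : 2 < |A.1 0 0 + A.1 1 1|) (hα : MobFixes A α) :
    ∃ x, x ≠ α ∧ MobFixes A x := by
  have hc : (A.1 1 0 : ℝ) ≠ 0 := by exact_mod_cast lowerLeft_ne_zero_of_two_lt_abs_trace ht
  -- Vieta: the fixed points are the roots of `c x² + (d - a) x - b`, which sum to `(a - d) / c`
  set β := (A.1 0 0 - A.1 1 1 : ℝ) / A.1 1 0 - α with hβ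
  have hcβ : (A.1 1 0 : ℝ) * β = A.1 0 0 - A.1 1 1 - A.1 1 0 * α := by
    rw [hβ]; field_simp
  refine ⟨β, fun h => (irrational_of_mobFixes ht hα).ne_rat
    ((A.1 0 0 - A.1 1 1) / (2 * A.1 1 0)) ?_, ?_⟩
  · push_cast
    rw [eq_div_iff (by positivity)]
    rw [h] at hcβ
    linarith
  · unfold MobFixes at hα ⊢
    linear_combination (α - β) * hcβ + hα

theorem exists_hyperbolic_mobFixes_of_isQuadIrr (hα : IsQuadIrr α) :
    ∃ A : SL(2, ℤ), 2 < |A.1 0 0 + A.1 1 1| ∧ MobFixes A α := by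
  obtain ⟨hirr, a, b, c, ha, hroot⟩ := hα
  obtain ⟨a, b, c, ha, hroot⟩ := exists_int_quadratic_of_rat ha hroot
  have hns := (irrational_iff_not_isSquare_discrim ha hroot).1 hirr
  have hnonneg : (0 : ℝ) ≤ (discrim a b c : ℤ) := intCast_discrim_eq_sq hroot ▸ sq_nonneg _
  have hpos : 0 < discrim a b c :=
    (Int.cast_nonneg_iff.1 hnonneg).lt_of_ne fun h => hns (h ▸ IsSquare.zero)
  exact exists_hyperbolic_mobFixes_of_quadratic hroot hpos hns

theorem isQuadIrr_of_mobFixes (ht : 2 < |A.1 0 0 + A.1 1 1|) (hα : MobFixes A α) :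
    IsQuadIrr α := by
  obtain ⟨x, hne, hx⟩ := exists_ne_mobFixes ht hα
  obtain ⟨hirr, -, a, b, c, ha, hroot, -⟩ := isGalConj_of_mobFixes ht hα hx hne
  exact ⟨hirr, a, b, c, ha, hroot⟩

end Hyperbolic

/-- A real number `α` is a quadratic irrational if and only if there is a matrix
`A ∈ SL₂(ℤ)` with `|tr A| > 2` whose homography fixes `α`; moreover, for any such `A`,
the other real fixed point of the homography of `A` is the Galois conjugate `α^σ`
of `α`. -/
theorem isQuadIrr_iff_fixed_by_hyperbolic (α : ℝ) :
    (IsQuadIrr α ↔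
      ∃ A : Matrix.SpecialLinearGroup (Fin 2) ℤ, 2 < |A.1 0 0 + A.1 1 1| ∧ MobFixes A α) ∧
    (∀ A : Matrix.SpecialLinearGroup (Fin 2) ℤ, 2 < |A.1 0 0 + A.1 1 1| → MobFixes A α →
      (∃ x : ℝ, x ≠ α ∧ MobFixes A x ∧ IsGalConj α x) ∧
      ∀ x : ℝ, MobFixes A x → x ≠ α → IsGalConj α x) := by
  refine ⟨⟨exists_hyperbolic_mobFixes_of_isQuadIrr,
    fun ⟨A, ht, hα⟩ => isQuadIrr_of_mobFixes ht hα⟩, fun A ht hα => ⟨?_, ?_⟩⟩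
  · obtain ⟨x, hne, hx⟩ := exists_ne_mobFixes ht hα
    exact ⟨x, hne, hx, isGalConj_of_mobFixes ht hα hx hne⟩
  · exact fun x hx hne => isGalConj_of_mobFixes ht hα hx hne
end

section
/- Let α and α' be distinct real numbers with |α − α'| < 2. Then the infimum of the hyperbolic distances d_ℍ(z, w), over all z in the horoball {z ∈ ℍ : Im z ≥ 1} and all w on the geodesic line with endpoints α and α' (the Euclidean semicircle {w ∈ ℍ : |w − (α+α')/2| = |α−α'|/2}), is equal to ln(2/|α − α'|). In particular, the common perpendicular between this horoball and this geodesic has length ln H where H = 2/|α − α'|. -/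
/-!
The horoball `{Im z ≥ h}` and the geodesic `|w - c| = r` (with `r ≤ h`) are both symmetric about
the vertical line `Re = c`, and their closest points are its intersections `c + h i` and `c + r i`
with them, at distance `log (h / r)`. That nothing comes closer follows from
`log (Im z) - log (Im w) ≤ d(z, w)`, since `Im z ≥ h` on the horoball and `Im w ≤ r` on the
semicircle.
-/

open UpperHalfPlane Real

lemma Complex.im_le_norm_sub_ofReal (w : ℂ) (c : ℝ) : w.im ≤ ‖w - c‖ := by
  simpa using (le_abs_self _).trans (Complex.abs_im_le_norm (w - c))

namespace UpperHalfPlane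

lemma log_im_sub_log_im_le_dist (z w : ℍ) : log z.im - log w.im ≤ dist z w :=
  (le_abs_self _).trans ((Real.dist_eq _ _).symm.trans_le (dist_log_im_le z w))

def ofReIm (x : ℝ) {y : ℝ} (hy : 0 < y) : ℍ := ⟨⟨x, y⟩, hy⟩

@[simp] lemma ofReIm_im (x : ℝ) {y : ℝ} (hy : 0 < y) : (ofReIm x hy).im = y := rfl

lemma norm_ofReIm_sub_ofReal (x : ℝ) {y : ℝ} (hy : 0 < y) :
    ‖(ofReIm x hy : ℂ) - x‖ = y := by
  have : (ofReIm x hy : ℂ) - x = (y : ℂ) * Complex.I := by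
    apply Complex.ext <;> simp [ofReIm]
  rw [this, norm_mul, Complex.norm_I, mul_one, Complex.norm_real, norm_of_nonneg hy.le]

lemma dist_ofReIm_ofReIm (x : ℝ) {y y' : ℝ} (hy : 0 < y) (hy' : 0 < y') :
    dist (ofReIm x hy) (ofReIm x hy') = |log (y / y')| := by
  rw [dist_of_re_eq (z := ofReIm x hy) (w := ofReIm x hy') rfl, Real.dist_eq, ofReIm_im, ofReIm_im, log_div hy.ne' hy'.ne']

theorem isLeast_dist_horoball_semicircle (c : ℝ) {h r : ℝ} (hr : 0 < r) (hrh : r ≤ h) :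
    IsLeast {d : ℝ | ∃ z w : ℍ, h ≤ z.im ∧ ‖(w : ℂ) - c‖ = r ∧ d = dist z w} (log (h / r)) := by
  have hh : 0 < h := hr.trans_le hrh
  have hlog : 0 ≤ log (h / r) := log_nonneg ((one_le_div hr).mpr hrh)
  refine ⟨⟨ofReIm c hh, ofReIm c hr, le_rfl, norm_ofReIm_sub_ofReal c hr, ?_⟩, ?_⟩
  · rw [dist_ofReIm_ofReIm, abs_of_nonneg hlog]
  · rintro _ ⟨z, w, hz, hw, rfl⟩
    have hwr : w.im ≤ r := hw ▸ Complex.im_le_norm_sub_ofReal w c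
    calc log (h / r) = log h - log r := log_div hh.ne' hr.ne'
      _ ≤ log z.im - log w.im :=
        sub_le_sub (log_le_log hh hz) (log_le_log w.im_pos hwr)
      _ ≤ dist z w := log_im_sub_log_im_le_dist z w

end UpperHalfPlane

/-- Let `α ≠ α'` be real numbers with `|α − α'| < 2`. The infimum of the hyperbolic
distances `d_ℍ(z,w)`, over `z` in the horoball `{Im z ≥ 1}` and `w` on the geodesic line
with endpoints `α` and `α'` (the Euclidean semicircle of center `(α+α')/2` and radius
`|α−α'|/2`), equals `ln(2/|α−α'|)`; i.e. the common perpendicular between this horoball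
and this geodesic has length `ln H` with `H = 2/|α − α'|`. -/
theorem dist_horoball_to_geodesic (α α' : ℝ) (hne : α ≠ α') (hlt : |α - α'| < 2) :
    sInf {d : ℝ | ∃ z w : UpperHalfPlane, 1 ≤ z.im ∧
        ‖(w : ℂ) - (((α + α') / 2 : ℝ) : ℂ)‖ = |α - α'| / 2 ∧
        d = dist z w} =
      Real.log (2 / |α - α'|) := by
  have hr : 0 < |α - α'| / 2 := by simpa [sub_eq_zero] using hne
  rw [(isLeast_dist_horoball_semicircle ((α + α') / 2) hr (by linarith)).csInf_eq, one_div_div]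
end

section
/- Let ξ be an irrational real number with continued fraction expansion ξ = [a₀; a₁, a₂, …]. Then the sequence (a_n)_{n≥1} of partial quotients of ξ is bounded if and only if the image in the modular curve of the positive subray of the geodesic line from ∞ to ξ is bounded, i.e. if and only if sup_{0 < s ≤ 1} inf_{γ ∈ SL₂(ℤ)} d_ℍ(i, γ·(ξ + i s)) < +∞. -/
open scoped MatrixGroups

/-- The Gauss map iterates of `ξ`: `cfIter ξ 0 = ξ` and
`cfIter ξ (n+1) = 1/frac(cfIter ξ n)`, so that the continued fraction expansion
`ξ = [a₀; a₁, a₂, …]` has partial quotients `a_n = ⌊cfIter ξ n⌋`. -/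
noncomputable def cfIter (ξ : ℝ) : ℕ → ℝ
  | 0 => ξ
  | n + 1 => (Int.fract (cfIter ξ n))⁻¹

/-- The point `ξ + i·s` of the upper half-plane `ℍ`, for `s > 0`. -/
noncomputable def vertRayPt (ξ s : ℝ) (hs : 0 < s) : UpperHalfPlane :=
  ⟨(ξ : ℂ) + (s : ℂ) * Complex.I, by simpa using hs⟩

/-!
Along the ray `z = ξ + is`, an element of `SL₂(ℤ)` with bottom row `(c, d)` gives
`Im (γ z) = s / ((cξ + d)² + c²s²)`, which is at most `1 / (2|c||cξ + d|)` and equals it at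
`s = |cξ + d| / |c|`. So the heights of the orbits along the ray are bounded iff `ξ` is badly
approximable. On the Diophantine side, the convergents `p_n / q_n` satisfy
`|q_n ξ - p_n| (q_n ξ_{n+1} + q_{n-1}) = 1`, where `ξ_{n+1}` is the complete quotient, and are
best approximations; together these show that `ξ` is badly approximable iff its partial
quotients are bounded. Finally, bounded orbit heights mean bounded distance to the orbit of `i`:
points of the standard fundamental domain `𝒟` lie within `1 + 2 Im w` of `i`, and conversely
`Im w ≤ Im (γ i) e^{d(w, γ i)} ≤ e^{d(w, γ i)}`.
-/

open UpperHalfPlane ModularGroup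

open scoped Modular

section GaussMap

theorem irrational_cfIter {ξ : ℝ} (hξ : Irrational ξ) : ∀ n, Irrational (cfIter ξ n)
  | 0 => hξ
  | n + 1 => by
    rw [cfIter, ← Int.self_sub_floor]
    exact ((irrational_cfIter hξ n).sub_intCast _).inv

theorem one_lt_cfIter_succ {ξ : ℝ} (hξ : Irrational ξ) (n : ℕ) : 1 < cfIter ξ (n + 1) :=
  (one_lt_inv₀ (Int.fract_pos.mpr ((irrational_cfIter hξ n).ne_int _))).mpr (Int.fract_lt_one _)

theorem one_le_floor_cfIter_succ {ξ : ℝ} (hξ : Irrational ξ) (n : ℕ) :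
    1 ≤ ⌊cfIter ξ (n + 1)⌋ :=
  Int.le_floor.mpr (by exact_mod_cast (one_lt_cfIter_succ hξ n).le)

theorem cfIter_mul_cfIter_succ {ξ : ℝ} (hξ : Irrational ξ) (n : ℕ) :
    cfIter ξ n * cfIter ξ (n + 1) = ⌊cfIter ξ n⌋ * cfIter ξ (n + 1) + 1 := by
  have hne : cfIter ξ (n + 1) ≠ 0 := (zero_lt_one.trans (one_lt_cfIter_succ hξ n)).ne'
  have hinv : (cfIter ξ (n + 1))⁻¹ = Int.fract (cfIter ξ n) := inv_inv _
  calc cfIter ξ n * cfIter ξ (n + 1)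
      = (⌊cfIter ξ n⌋ + (cfIter ξ (n + 1))⁻¹) * cfIter ξ (n + 1) := by
        rw [hinv, Int.floor_add_fract]
    _ = ⌊cfIter ξ n⌋ * cfIter ξ (n + 1) + 1 := by rw [add_mul, inv_mul_cancel₀ hne]

end GaussMap

section Convergents

/-- `convNum ξ (n + 1) / convDen ξ (n + 1)` is the `n`-th convergent `p_n / q_n` of `ξ`;
index `0` holds `p_{-1} = 1` and `q_{-1} = 0`. -/
noncomputable def convNum (ξ : ℝ) : ℕ → ℤ
  | 0 => 1
  | 1 => ⌊ξ⌋
  | n + 2 => ⌊cfIter ξ (n + 1)⌋ * convNum ξ (n + 1) + convNum ξ n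

noncomputable def convDen (ξ : ℝ) : ℕ → ℤ
  | 0 => 0
  | 1 => 1
  | n + 2 => ⌊cfIter ξ (n + 1)⌋ * convDen ξ (n + 1) + convDen ξ n

variable {ξ : ℝ}

theorem one_le_convDen_succ (hξ : Irrational ξ) : ∀ n, 1 ≤ convDen ξ (n + 1)
  | 0 => le_rfl
  | 1 => by simpa [convDen] using one_le_floor_cfIter_succ hξ 0
  | n + 2 => by
    have ha := one_le_floor_cfIter_succ hξ (n + 1)
    have h₁ := one_le_convDen_succ hξ (n + 1)
    have h₀ := one_le_convDen_succ hξ n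
    rw [convDen]
    nlinarith

theorem convDen_nonneg (hξ : Irrational ξ) : ∀ n, 0 ≤ convDen ξ n
  | 0 => le_rfl
  | n + 1 => zero_le_one.trans (one_le_convDen_succ hξ n)

theorem convDen_add_le (hξ : Irrational ξ) (n : ℕ) :
    convDen ξ (n + 1) + convDen ξ n ≤ convDen ξ (n + 2) := by
  have ha := one_le_floor_cfIter_succ hξ n
  have hq := convDen_nonneg hξ (n + 1)
  rw [convDen]
  nlinarith

theorem convDen_le_succ (hξ : Irrational ξ) : ∀ n, convDen ξ n ≤ convDen ξ (n + 1)
  | 0 => zero_le_one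
  | n + 1 => by linarith [convDen_add_le hξ n, convDen_nonneg hξ n]

theorem lt_convDen (hξ : Irrational ξ) : ∀ n : ℕ, (n : ℤ) < convDen ξ (n + 2)
  | 0 => one_le_convDen_succ hξ 1
  | n + 1 => by
    push_cast
    linarith [lt_convDen hξ n, convDen_add_le hξ (n + 1), one_le_convDen_succ hξ n]

theorem exists_convDen_le_lt (hξ : Irrational ξ) {c : ℤ} (hc : 1 ≤ c) :
    ∃ n, convDen ξ (n + 1) ≤ c ∧ c < convDen ξ (n + 2) := by
  classical
  have hex : ∃ n, c < convDen ξ (n + 2) := ⟨c.toNat, by have := lt_convDen hξ c.toNat; omega⟩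
  refine ⟨Nat.find hex, ?_, Nat.find_spec hex⟩
  rcases Nat.eq_zero_or_eq_succ_pred (Nat.find hex) with h | h
  · rw [h]
    exact hc
  · rw [h]
    exact not_lt.mp (Nat.find_min hex (by omega))

theorem convDen_mul_convNum_sub (ξ : ℝ) : ∀ n,
    convDen ξ (n + 1) * convNum ξ n - convNum ξ (n + 1) * convDen ξ n = (-1) ^ n
  | 0 => by simp [convNum, convDen]
  | n + 1 => by
    rw [convDen, convNum]
    linear_combination (-1 : ℤ) * convDen_mul_convNum_sub ξ n

theorem isCoprime_convDen_convNum (ξ : ℝ) (n : ℕ) :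
    IsCoprime (convDen ξ (n + 1)) (convNum ξ (n + 1)) := by
  have hsq : ((-1 : ℤ) ^ n) * (-1) ^ n = 1 := by rw [← mul_pow]; norm_num
  exact ⟨(-1) ^ n * convNum ξ n, -(-1) ^ n * convDen ξ n, by
    linear_combination (-1 : ℤ) ^ n * convDen_mul_convNum_sub ξ n + hsq⟩

theorem mul_convDen_cfIter_add (hξ : Irrational ξ) : ∀ n,
    ξ * (convDen ξ (n + 1) * cfIter ξ (n + 1) + convDen ξ n) =
      convNum ξ (n + 1) * cfIter ξ (n + 1) + convNum ξ n
  | 0 => by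
    have h : ξ * cfIter ξ 1 = ⌊ξ⌋ * cfIter ξ 1 + 1 := cfIter_mul_cfIter_succ hξ 0
    simpa [convNum, convDen, mul_comm] using h
  | n + 1 => by
    have hx := cfIter_mul_cfIter_succ hξ (n + 1)
    rw [convDen, convNum]
    push_cast
    linear_combination cfIter ξ (n + 2) * mul_convDen_cfIter_add hξ n -
      (ξ * convDen ξ (n + 1) - convNum ξ (n + 1)) * hx

end Convergents

section Approximation

variable {ξ : ℝ}

noncomputable def convErr (ξ : ℝ) (n : ℕ) : ℝ := convDen ξ (n + 1) * ξ - convNum ξ (n + 1)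

theorem convErr_mul (hξ : Irrational ξ) (n : ℕ) :
    convErr ξ n * (convDen ξ (n + 1) * cfIter ξ (n + 1) + convDen ξ n) = (-1) ^ n := by
  have hdet : (convDen ξ (n + 1) * convNum ξ n - convNum ξ (n + 1) * convDen ξ n : ℝ) =
      (-1) ^ n := by exact_mod_cast convDen_mul_convNum_sub ξ n
  rw [convErr]
  linear_combination (convDen ξ (n + 1) : ℝ) * mul_convDen_cfIter_add hξ n + hdet

theorem convDen_mul_cfIter_add_pos (hξ : Irrational ξ) (n : ℕ) :
    0 < convDen ξ (n + 1) * cfIter ξ (n + 1) + convDen ξ n := by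
  have hq : (1 : ℝ) ≤ convDen ξ (n + 1) := by exact_mod_cast one_le_convDen_succ hξ n
  have hq₀ : (0 : ℝ) ≤ convDen ξ n := by exact_mod_cast convDen_nonneg hξ n
  nlinarith [one_lt_cfIter_succ hξ n]

theorem abs_convErr_mul (hξ : Irrational ξ) (n : ℕ) :
    |convErr ξ n| * (convDen ξ (n + 1) * cfIter ξ (n + 1) + convDen ξ n) = 1 := by
  rw [← abs_of_pos (convDen_mul_cfIter_add_pos hξ n), ← abs_mul, convErr_mul hξ n, abs_pow,
    abs_neg, abs_one, one_pow]

theorem convErr_ne_zero (hξ : Irrational ξ) (n : ℕ) : convErr ξ n ≠ 0 := fun h => by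
  simpa [h] using abs_convErr_mul hξ n

theorem convErr_mul_convErr_succ_neg (hξ : Irrational ξ) (n : ℕ) :
    convErr ξ n * convErr ξ (n + 1) < 0 := by
  have hprod : (convErr ξ n * convErr ξ (n + 1)) *
      ((convDen ξ (n + 1) * cfIter ξ (n + 1) + convDen ξ n) *
        (convDen ξ (n + 2) * cfIter ξ (n + 2) + convDen ξ (n + 1))) = -1 := by
    have hsq : ((-1 : ℝ) ^ n) * (-1) ^ n = 1 := by rw [← mul_pow]; norm_num
    linear_combination
      convErr ξ (n + 1) * (convDen ξ (n + 2) * cfIter ξ (n + 2) + convDen ξ (n + 1)) *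
        convErr_mul hξ n + (-1 : ℝ) ^ n * convErr_mul hξ (n + 1) - hsq
  exact neg_of_mul_neg_left (hprod ▸ neg_one_lt_zero)
    (mul_pos (convDen_mul_cfIter_add_pos hξ n) (convDen_mul_cfIter_add_pos hξ (n + 1))).le

theorem floor_cfIter_mul_convDen_mul_abs_convErr_le_one (hξ : Irrational ξ) (n : ℕ) :
    (⌊cfIter ξ (n + 1)⌋ : ℝ) * convDen ξ (n + 1) * |convErr ξ n| ≤ 1 := by
  have hq : (0 : ℝ) ≤ convDen ξ (n + 1) := by exact_mod_cast convDen_nonneg hξ (n + 1)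
  have hq₀ : (0 : ℝ) ≤ convDen ξ n := by exact_mod_cast convDen_nonneg hξ n
  have hfloor : (⌊cfIter ξ (n + 1)⌋ : ℝ) * convDen ξ (n + 1) ≤
      convDen ξ (n + 1) * cfIter ξ (n + 1) + convDen ξ n := by
    nlinarith [Int.floor_le (cfIter ξ (n + 1))]
  calc (⌊cfIter ξ (n + 1)⌋ : ℝ) * convDen ξ (n + 1) * |convErr ξ n|
      ≤ (convDen ξ (n + 1) * cfIter ξ (n + 1) + convDen ξ n) * |convErr ξ n| :=
        mul_le_mul_of_nonneg_right hfloor (abs_nonneg _)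
    _ = 1 := by rw [mul_comm, abs_convErr_mul hξ n]

theorem one_lt_floor_cfIter_add_two_mul_convDen_mul_abs_convErr (hξ : Irrational ξ) (n : ℕ) :
    1 < ((⌊cfIter ξ (n + 1)⌋ : ℝ) + 2) * convDen ξ (n + 1) * |convErr ξ n| := by
  have hq : (1 : ℝ) ≤ convDen ξ (n + 1) := by exact_mod_cast one_le_convDen_succ hξ n
  have hq₀ : (convDen ξ n : ℝ) ≤ convDen ξ (n + 1) := by exact_mod_cast convDen_le_succ hξ n
  have hfloor : convDen ξ (n + 1) * cfIter ξ (n + 1) + convDen ξ n <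
      ((⌊cfIter ξ (n + 1)⌋ : ℝ) + 2) * convDen ξ (n + 1) := by
    nlinarith [Int.lt_floor_add_one (cfIter ξ (n + 1))]
  calc (1 : ℝ) = (convDen ξ (n + 1) * cfIter ξ (n + 1) + convDen ξ n) * |convErr ξ n| := by
        rw [mul_comm, abs_convErr_mul hξ n]
    _ < _ := mul_lt_mul_of_pos_right hfloor (abs_pos.mpr (convErr_ne_zero hξ n))

theorem abs_le_abs_add_of_mul_nonneg {α : Type*} [CommRing α] [LinearOrder α]
    [IsStrictOrderedRing α] {a b : α} (h : 0 ≤ a * b) : |a| ≤ |a + b| :=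
  sq_le_sq.mp (by nlinarith)

theorem abs_convErr_le_abs_sub (hξ : Irrational ξ) {n : ℕ} {c : ℤ} (d : ℤ) (hc : 1 ≤ c)
    (hcn : c < convDen ξ (n + 2)) : |convErr ξ n| ≤ |c * ξ - d| := by
  -- `(c, d)` in the basis `(q_n, p_n), (q_{n+1}, p_{n+1})` of `ℤ²`
  obtain ⟨x, y, hcxy, hdxy⟩ : ∃ x y : ℤ, c = x * convDen ξ (n + 1) + y * convDen ξ (n + 2) ∧
      d = x * convNum ξ (n + 1) + y * convNum ξ (n + 2) := by
    have hdet := convDen_mul_convNum_sub ξ (n + 1)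
    have hsq : ((-1 : ℤ) ^ (n + 1)) * (-1) ^ (n + 1) = 1 := by rw [← mul_pow]; norm_num
    exact ⟨(-1) ^ (n + 1) * (d * convDen ξ (n + 2) - c * convNum ξ (n + 2)),
      (-1) ^ (n + 1) * (c * convNum ξ (n + 1) - d * convDen ξ (n + 1)),
      by linear_combination -c * hsq - (-1) ^ (n + 1) * c * hdet,
      by linear_combination -d * hsq - (-1) ^ (n + 1) * d * hdet⟩
  have hsplit : c * ξ - d = x * convErr ξ n + y * convErr ξ (n + 1) := by
    rw [hcxy, hdxy, convErr, convErr]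
    push_cast
    ring
  have hq₁ := one_le_convDen_succ hξ n
  have hq₂ := one_le_convDen_succ hξ (n + 1)
  have hx : x ≠ 0 := by
    rintro rfl
    rcases le_or_gt y 0 with hy | hy <;> nlinarith
  have hxy : x * y ≤ 0 := by
    by_contra! hxy
    rcases lt_or_gt_of_ne hx with hx' | hx'
    · nlinarith [neg_of_mul_pos_right hxy hx'.le]
    · nlinarith [pos_of_mul_pos_right hxy hx'.le]
  have hsame : 0 ≤ (x * convErr ξ n) * (y * convErr ξ (n + 1)) := by
    have : ((x * y : ℤ) : ℝ) ≤ 0 := by exact_mod_cast hxy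
    push_cast at this
    nlinarith [convErr_mul_convErr_succ_neg hξ n]
  have hx₁ : (1 : ℝ) ≤ |(x : ℝ)| := by exact_mod_cast Int.one_le_abs hx
  calc |convErr ξ n| ≤ |(x : ℝ)| * |convErr ξ n| := le_mul_of_one_le_left (abs_nonneg _) hx₁
    _ = |x * convErr ξ n| := (abs_mul _ _).symm
    _ ≤ |c * ξ - d| := hsplit ▸ abs_le_abs_add_of_mul_nonneg hsame

end Approximation

section BadlyApproximable

def BadlyApproximable (ξ : ℝ) : Prop :=
  ∃ κ > 0, ∀ c d : ℤ, c ≠ 0 → κ ≤ |(c : ℝ)| * |c * ξ - d|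

theorem badlyApproximable_of_floor_cfIter_le {ξ B : ℝ} (hξ : Irrational ξ)
    (hB : ∀ n, (⌊cfIter ξ (n + 1)⌋ : ℝ) ≤ B) : BadlyApproximable ξ := by
  have hB₂ : 0 < B + 2 := by
    linarith [hB 0, (show (1 : ℝ) ≤ ⌊cfIter ξ 1⌋ by exact_mod_cast one_le_floor_cfIter_succ hξ 0)]
  have hpos : ∀ c d : ℤ, 1 ≤ c → 1 / (B + 2) ≤ |(c : ℝ)| * |c * ξ - d| := by
    intro c d hc
    obtain ⟨n, hqc, hcq⟩ := exists_convDen_le_lt hξ hc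
    have hc' : (1 : ℝ) ≤ c := by exact_mod_cast hc
    have hqc' : (convDen ξ (n + 1) : ℝ) ≤ c := by exact_mod_cast hqc
    have hbest := abs_convErr_le_abs_sub hξ d hc hcq
    have hlow := one_lt_floor_cfIter_add_two_mul_convDen_mul_abs_convErr hξ n
    have ha := hB n
    rw [div_le_iff₀ hB₂, abs_of_pos (by linarith)]
    calc (1 : ℝ) ≤ ((⌊cfIter ξ (n + 1)⌋ : ℝ) + 2) * convDen ξ (n + 1) * |convErr ξ n| := hlow.le
      _ ≤ (B + 2) * c * |c * ξ - d| := by gcongr; exact_mod_cast convDen_nonneg hξ (n + 1)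
      _ = c * |c * ξ - d| * (B + 2) := by ring
  refine ⟨1 / (B + 2), by positivity, fun c d hc => ?_⟩
  rcases lt_or_gt_of_ne hc with hneg | hpos'
  · have h := hpos (-c) (-d) (by omega)
    push_cast at h
    rwa [abs_neg, show -(c : ℝ) * ξ - -d = -(c * ξ - d) by ring, abs_neg] at h
  · exact hpos c d hpos'

end BadlyApproximable

section Height

variable {ξ : ℝ}

theorem im_vertRayPt {s : ℝ} (hs : 0 < s) : (vertRayPt ξ s hs).im = s := by
  simp [vertRayPt]

theorem im_smul_vertRayPt (g : SL(2, ℤ)) {s : ℝ} (hs : 0 < s) :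
    (g • vertRayPt ξ s hs).im = s / ((g 1 0 * ξ + g 1 1) ^ 2 + (g 1 0 * s) ^ 2) := by
  have hdenom : denom g (vertRayPt ξ s hs) =
      ((g 1 0 * ξ + g 1 1 : ℝ) : ℂ) + ((g 1 0 * s : ℝ) : ℂ) * Complex.I := by
    rw [denom_apply, show ((vertRayPt ξ s hs : ℍ) : ℂ) = ξ + s * Complex.I from rfl]
    push_cast
    ring
  rw [ModularGroup.im_smul_eq_div_normSq, hdenom, Complex.normSq_add_mul_I, im_vertRayPt]

theorem BadlyApproximable.exists_forall_im_smul_vertRayPt_le (hξ : BadlyApproximable ξ) :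
    ∃ T, ∀ (s : ℝ) (hs : 0 < s), s ≤ 1 → ∀ g : SL(2, ℤ), (g • vertRayPt ξ s hs).im ≤ T := by
  obtain ⟨κ, hκ, hbad⟩ := hξ
  refine ⟨max 1 (1 / (2 * κ)), fun s hs hs1 g => ?_⟩
  rw [im_smul_vertRayPt]
  by_cases hc : g 1 0 = 0
  · have hd : (g 1 1 : ℝ) ^ 2 = 1 := by
      have := Int.isUnit_sq (isCoprime_zero_left.mp (hc ▸ bottom_row_coprime g))
      exact_mod_cast this
    simpa [hc, hd] using hs1.trans (le_max_left _ _)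
  · refine le_max_of_le_right ?_
    have hcd := hbad (g 1 0) (-g 1 1) hc
    push_cast at hcd
    rw [sub_neg_eq_add] at hcd
    set c : ℝ := (g 1 0 : ℝ)
    set r : ℝ := c * ξ + g 1 1
    have hamgm : 2 * (|c| * |r|) * s ≤ r ^ 2 + (c * s) ^ 2 := by
      calc 2 * (|c| * |r|) * s = 2 * |r| * (|c| * s) := by ring
        _ ≤ |r| ^ 2 + (|c| * s) ^ 2 := two_mul_le_add_sq _ _
        _ = r ^ 2 + (c * s) ^ 2 := by rw [mul_pow, sq_abs, sq_abs, mul_pow]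
    rw [div_le_div_iff₀ (by nlinarith) (by positivity)]
    nlinarith

theorem exists_floor_cfIter_le_two_mul_im_smul_vertRayPt (hξ : Irrational ξ) (n : ℕ) :
    ∃ (s : ℝ) (hs : 0 < s), s ≤ 1 ∧
      ∃ g : SL(2, ℤ), (⌊cfIter ξ (n + 1)⌋ : ℝ) ≤ 2 * (g • vertRayPt ξ s hs).im := by
  have hq : (1 : ℝ) ≤ convDen ξ (n + 1) := by exact_mod_cast one_le_convDen_succ hξ n
  have ha : (1 : ℝ) ≤ ⌊cfIter ξ (n + 1)⌋ := by exact_mod_cast one_le_floor_cfIter_succ hξ n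
  have hae := floor_cfIter_mul_convDen_mul_abs_convErr_le_one hξ n
  have he : 0 < |convErr ξ n| := abs_pos.mpr (convErr_ne_zero hξ n)
  set q : ℝ := (convDen ξ (n + 1) : ℝ)
  set e := convErr ξ n with he_def
  have hs : 0 < |e| / q := by positivity
  have hs1 : |e| / q ≤ 1 := by
    rw [div_le_one (by positivity)]
    nlinarith [mul_le_mul_of_nonneg_right ha (by positivity : 0 ≤ q * |e|),
      mul_le_mul_of_nonneg_right hq he.le]
  obtain ⟨g, -, hg⟩ := bottom_row_surj (R := ℤ) (show ![convDen ξ (n + 1), -convNum ξ (n + 1)] ∈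
    {cd | IsCoprime (cd 0) (cd 1)} from (isCoprime_convDen_convNum ξ n).neg_right)
  have hc : g 1 0 = convDen ξ (n + 1) := by simpa using congrFun hg 0
  have hd : g 1 1 = -convNum ξ (n + 1) := by simpa using congrFun hg 1
  refine ⟨|e| / q, hs, hs1, g, ?_⟩
  have hden : ((g 1 0 : ℝ) * ξ + g 1 1) ^ 2 + (g 1 0 * (|e| / q)) ^ 2 = 2 * |e| ^ 2 := by
    rw [hc, hd, mul_div_cancel₀ _ (by positivity : q ≠ 0), sq_abs, he_def, convErr]
    push_cast
    ring
  rw [im_smul_vertRayPt, hden, div_div, mul_div_assoc', le_div_iff₀ (by positivity)]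
  nlinarith

end Height

section Hyperbolic

instance : IsIsometricSMul SL(2, ℤ) ℍ := ⟨fun g => isometry_smul ℍ (g : SL(2, ℝ))⟩

theorem im_smul_I_le_one (g : SL(2, ℤ)) : (g • I).im ≤ 1 := by
  have hcd : (0 : ℤ) < g 1 1 ^ 2 + g 1 0 ^ 2 :=
    lt_of_le_of_ne (by positivity) (bottom_row_coprime g).symm.sq_add_sq_ne_zero.symm
  have hdenom : denom g I = ((g 1 1 : ℝ) : ℂ) + ((g 1 0 : ℝ) : ℂ) * Complex.I := by
    rw [denom_apply, coe_I]
    push_cast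
    ring
  have hcd' : (0 : ℝ) < (g 1 1 : ℝ) ^ 2 + (g 1 0 : ℝ) ^ 2 := by exact_mod_cast hcd
  rw [ModularGroup.im_smul_eq_div_normSq, hdenom, Complex.normSq_add_mul_I, I_im, div_le_one hcd']
  exact_mod_cast hcd

theorem im_smul_le_exp_dist_I_smul (g γ : SL(2, ℤ)) (z : ℍ) :
    (g • z).im ≤ Real.exp (dist I (γ • z)) := by
  have hz : g • z = (g * γ⁻¹) • γ • z := by rw [smul_smul, inv_mul_cancel_right]
  calc (g • z).im
      ≤ ((g * γ⁻¹) • I).im * Real.exp (dist ((g * γ⁻¹) • γ • z) ((g * γ⁻¹) • I)) :=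
        hz ▸ im_le_im_mul_exp_dist _ _
    _ ≤ 1 * Real.exp (dist I (γ • z)) := by
        rw [dist_smul, dist_comm]
        gcongr
        exact im_smul_I_le_one _
    _ = Real.exp (dist I (γ • z)) := one_mul _

theorem dist_I_le_of_mem_fd {w : ℍ} (hw : w ∈ 𝒟) : dist I w ≤ 1 + 2 * w.im := by
  have him : 1 / 2 ≤ w.im := by nlinarith [three_le_four_mul_im_sq_of_mem_fd hw, w.im_pos]
  have hnum : dist (I : ℂ) w ≤ 1 / 2 + w.im := by
    rw [Complex.dist_eq]
    refine (Complex.norm_le_abs_re_add_abs_im _).trans ?_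
    have hre : |w.re| ≤ 1 / 2 := hw.2
    simp only [coe_I, Complex.sub_re, Complex.I_re, coe_re, zero_sub, abs_neg, Complex.sub_im,
      Complex.I_im, coe_im]
    have : |1 - w.im| ≤ w.im := abs_le.mpr ⟨by linarith, by linarith⟩
    linarith
  have hsqrt : 1 / 2 ≤ √(I.im * w.im) := by
    rw [I_im, one_mul, Real.le_sqrt' (by norm_num)]
    linarith
  calc dist I w ≤ dist (I : ℂ) w / √(I.im * w.im) := dist_le_dist_coe_div_sqrt _ _
    _ ≤ (1 / 2 + w.im) / (1 / 2) := by gcongr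
    _ = 1 + 2 * w.im := by ring

theorem exists_dist_I_smul_le {z : ℍ} {T : ℝ} (hT : ∀ g : SL(2, ℤ), (g • z).im ≤ T) :
    ∃ γ : SL(2, ℤ), dist I (γ • z) ≤ 1 + 2 * T := by
  obtain ⟨γ, hγ⟩ := exists_smul_mem_fd z
  exact ⟨γ, (dist_I_le_of_mem_fd hγ).trans (by linarith [hT γ])⟩

end Hyperbolic

/-- For an irrational real number `ξ`, the sequence `(a_n)_{n ≥ 1}` of partial
quotients of the continued fraction expansion of `ξ` is bounded if and only if the
image in the modular curve of the positive subray of the geodesic line in `ℍ` from `∞`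
to `ξ` is bounded, i.e. iff `sup_{0 < s ≤ 1} inf_{γ ∈ SL₂(ℤ)} d_ℍ(i, γ·(ξ + i s))` is
finite. -/
theorem bounded_partial_quotients_iff_bounded_geodesic_ray (ξ : ℝ) (hξ : Irrational ξ) :
    (∃ B : ℝ, ∀ n : ℕ, 1 ≤ n → (⌊cfIter ξ n⌋ : ℝ) ≤ B) ↔
    (∃ M : ℝ, ∀ (s : ℝ) (hs : 0 < s), s ≤ 1 →
      ∃ γ : SL(2, ℤ), dist UpperHalfPlane.I (γ • vertRayPt ξ s hs) ≤ M) := by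
  constructor
  · rintro ⟨B, hB⟩
    obtain ⟨T, hT⟩ := (badlyApproximable_of_floor_cfIter_le hξ fun n => hB (n + 1)
      n.succ_pos).exists_forall_im_smul_vertRayPt_le
    exact ⟨1 + 2 * T, fun s hs hs1 => exists_dist_I_smul_le (hT s hs hs1)⟩
  · rintro ⟨M, hM⟩
    refine ⟨2 * Real.exp M, fun n hn => ?_⟩
    obtain ⟨k, rfl⟩ := Nat.exists_eq_add_of_le' hn
    obtain ⟨s, hs, hs1, g, hg⟩ := exists_floor_cfIter_le_two_mul_im_smul_vertRayPt hξ k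
    obtain ⟨γ, hγ⟩ := hM s hs hs1
    have := im_smul_le_exp_dist_I_smul g γ (vertRayPt ξ s hs)
    linarith [Real.exp_le_exp.mpr hγ]
end
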